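/- arXiv:1411.6693 — 3 statements merged into one kernel-verified Lean document; each statement's English description precedes it below -/
import Mathlib

section
/- If L is a right Leibniz algebra with product [·,·], then the trilinear operation {x,y,z} := [[x,y],z] makes L into a Leibniz triple system, i.e., it satisfies the two defining identities {a,{b,c,d},e} = {{a,b,c},d,e} − {{a,c,b},d,e} − {{a,d,b},c,e} + {{a,d,c},b,e} and {a,b,{c,d,e}} = {{a,b,c},d,e} − {{a,b,d},c,e} − {{a,b,e},c,d} + {{a,b,e},d,c}. -/
/-! Solving the right Leibniz identity for `[x,[y,z]]` rewrites every bracket with a bracketed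
right argument as a difference of left-normed brackets. Applied repeatedly, it brings both sides
of each triple-system identity to the same combination of left-normed brackets of length five. -/

section RightLeibniz

variable {K L : Type*} [CommSemiring K] [AddCommGroup L] [Module K L]
  (br : L →ₗ[K] L →ₗ[K] L)
  (leib : ∀ x y z : L, br (br x y) z = br (br x z) y + br x (br y z))
include leib

theorem br_br_right_eq_sub (x y z : L) : br x (br y z) = br (br x y) z - br (br x z) y := by
  rw [eq_sub_iff_add_eq, add_comm]
  exact (leib x y z).symm

theorem br_triple_middle (a b c d e : L) :
    br (br a (br (br b c) d)) e =
      br (br (br (br a b) c) d) e - br (br (br (br a c) b) d) e -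
        br (br (br (br a d) b) c) e + br (br (br (br a d) c) b) e := by
  simp only [br_br_right_eq_sub br leib, map_sub, LinearMap.sub_apply]
  abel

theorem br_triple_right (a b c d e : L) :
    br (br a b) (br (br c d) e) =
      br (br (br (br a b) c) d) e - br (br (br (br a b) d) c) e -
        br (br (br (br a b) e) c) d + br (br (br (br a b) e) d) c := by
  simp only [br_br_right_eq_sub br leib, map_sub, LinearMap.sub_apply]
  abel

end RightLeibniz

/-- If `L` is a right Leibniz algebra with product `br`, then the trilinear operation
`{x,y,z} := [[x,y],z]` makes `L` into a Leibniz triple system. -/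
theorem leibniz_algebra_gives_leibniz_triple_system
    {K L : Type*} [Field K] [AddCommGroup L] [Module K L]
    (br : L →ₗ[K] L →ₗ[K] L)
    (leib : ∀ x y z : L, br (br x y) z = br (br x z) y + br x (br y z)) :
    (∀ a b c d e : L,
        br (br a (br (br b c) d)) e =
          br (br (br (br a b) c) d) e - br (br (br (br a c) b) d) e -
            br (br (br (br a d) b) c) e + br (br (br (br a d) c) b) e) ∧
    (∀ a b c d e : L,
        br (br a b) (br (br c d) e) =
          br (br (br (br a b) c) d) e - br (br (br (br a b) d) c) e -
            br (br (br (br a b) e) c) d + br (br (br (br a b) e) d) c) :=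
  ⟨br_triple_middle br leib, br_triple_right br leib⟩
end

section
/- In any Leibniz triple system T, the identity {{c,d,e},b,a} − {{c,d,e},a,b} − {{c,b,a},d,e} + {{c,a,b},d,e} − {c,{a,b,d},e} − {c,d,{a,b,e}} = 0 holds for all a,b,c,d,e ∈ T. -/
/-- In any Leibniz triple system `T`, the identity
`{{c,d,e},b,a} − {{c,d,e},a,b} − {{c,b,a},d,e} + {{c,a,b},d,e} − {c,{a,b,d},e} − {c,d,{a,b,e}} = 0`
holds. -/
theorem leibniz_triple_system_identity
    {K T : Type*} [Field K] [AddCommGroup T] [Module K T]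
    (t : T →ₗ[K] T →ₗ[K] T →ₗ[K] T)
    (id1 : ∀ a b c d e : T,
        t a (t b c d) e =
          t (t a b c) d e - t (t a c b) d e - t (t a d b) c e + t (t a d c) b e)
    (id2 : ∀ a b c d e : T,
        t a b (t c d e) =
          t (t a b c) d e - t (t a b d) c e - t (t a b e) c d + t (t a b e) d c) :
    ∀ a b c d e : T,
      t (t c d e) b a - t (t c d e) a b - t (t c b a) d e + t (t c a b) d e -
        t c (t a b d) e - t c d (t a b e) = 0 := by
  intro a b c d e
  rw [id1 c a b d e, id2 c d a b e]
  abel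
end

section
/- Let T be a Leibniz triple system and let J be the ideal generated by the set {{a,b,c} − {a,c,b} + {b,c,a} : a,b,c ∈ T}. Then {T,T,J} = 0 and {T,J,T} = 0. -/
/-!
Let `N` be the set of `j` with `{T,T,j} = {T,j,T} = 0`. The second identity expands `{u,v,{a,b,c}}`,
and the first one `{u,{a,b,c},v}`, as combinations of triples whose first argument is a product;
in both expansions the terms coming from `{a,b,c} − {a,c,b} + {b,c,a}` cancel, so `N` contains
the generators of `J`. The same expansions, applied to `{j,y,z}` with `j ∈ N`, only produce
triples with `j` in the second or third slot, so `N` is an ideal, and hence `J ≤ N`.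
-/

namespace LeibnizTripleSystem

variable {R T : Type*} [CommRing R] [AddCommGroup T] [Module R T]
  (t : T →ₗ[R] T →ₗ[R] T →ₗ[R] T)

def innerAnnihilator : Submodule R T where
  carrier := {j | ∀ x y, t x y j = 0 ∧ t x j y = 0}
  add_mem' ha hb x y := by simp [(ha x y).1, (hb x y).1, (ha x y).2, (hb x y).2]
  zero_mem' x y := by simp
  smul_mem' c _ ha x y := by simp [(ha x y).1, (ha x y).2]

variable {t}

theorem mem_innerAnnihilator {j : T} :
    j ∈ innerAnnihilator t ↔ ∀ x y, t x y j = 0 ∧ t x j y = 0 :=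
  Iff.rfl

variable
  (id1 : ∀ a b c d e : T,
    t a (t b c d) e = t (t a b c) d e - t (t a c b) d e - t (t a d b) c e + t (t a d c) b e)
  (id2 : ∀ a b c d e : T,
    t a b (t c d e) = t (t a b c) d e - t (t a b d) c e - t (t a b e) c d + t (t a b e) d c)
include id1 id2

theorem sub_add_mem_innerAnnihilator (a b c : T) :
    t a b c - t a c b + t b c a ∈ innerAnnihilator t := by
  refine fun u v ↦ ⟨?_, ?_⟩
  · simp only [map_sub, map_add, id2]
    abel
  · simp only [map_sub, map_add, LinearMap.sub_apply, LinearMap.add_apply, id1]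
    abel

theorem innerAnnihilator_isIdeal {j : T} (hj : j ∈ innerAnnihilator t) (y z : T) :
    t j y z ∈ innerAnnihilator t ∧ t y j z ∈ innerAnnihilator t ∧
      t y z j ∈ innerAnnihilator t := by
  have hright (x y : T) : t x y j = 0 := (hj x y).1
  have hmiddle (x y : T) : t x j y = 0 := (hj x y).2
  refine ⟨fun u v ↦ ⟨?_, ?_⟩, ?_, ?_⟩
  · simp [id2, hright, hmiddle]
  · simp [id1, hright, hmiddle]
  · simpa only [hmiddle] using (innerAnnihilator t).zero_mem
  · simpa only [hright] using (innerAnnihilator t).zero_mem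

end LeibnizTripleSystem

/-- Let `J` be the ideal of a Leibniz triple system `T` generated by the set
`{{a,b,c} − {a,c,b} + {b,c,a} : a,b,c ∈ T}`.  Then `{T,T,J} = 0` and `{T,J,T} = 0`. -/
theorem leibniz_triple_system_ideal_J
    {K T : Type*} [Field K] [AddCommGroup T] [Module K T]
    (t : T →ₗ[K] T →ₗ[K] T →ₗ[K] T)
    (id1 : ∀ a b c d e : T,
        t a (t b c d) e =
          t (t a b c) d e - t (t a c b) d e - t (t a d b) c e + t (t a d c) b e)
    (id2 : ∀ a b c d e : T,
        t a b (t c d e) =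
          t (t a b c) d e - t (t a b d) c e - t (t a b e) c d + t (t a b e) d c)
    (IsIdeal : Submodule K T → Prop)
    (hIsIdeal : ∀ I : Submodule K T,
      IsIdeal I ↔ ∀ x ∈ I, ∀ y z : T, t x y z ∈ I ∧ t y x z ∈ I ∧ t y z x ∈ I)
    (J : Submodule K T)
    (hJ : J = sInf {I : Submodule K T |
      IsIdeal I ∧ {x : T | ∃ a b c : T, x = t a b c - t a c b + t b c a} ⊆ (I : Set T)}) :
    ∀ x y : T, ∀ j ∈ J, t x y j = 0 ∧ t x j y = 0 := by
  have hJN : J ≤ LeibnizTripleSystem.innerAnnihilator t := by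
    rw [hJ]
    refine sInf_le ⟨(hIsIdeal _).2 fun j hj ↦
      LeibnizTripleSystem.innerAnnihilator_isIdeal id1 id2 hj, ?_⟩
    rintro _ ⟨a, b, c, rfl⟩
    exact LeibnizTripleSystem.sub_add_mem_innerAnnihilator id1 id2 a b c
  exact fun x y j hj ↦ LeibnizTripleSystem.mem_innerAnnihilator.1 (hJN hj) x y
end
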